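/- Let E, A, B ∈ ℝ and σ ∈ ℂ, γ ∈ ℝ with γ > −1 and |σ|² = (1+γ)γ, and suppose σ, γ are differentiable in t with the constraint holding for all t. Then the single complex equation i·σ'/2 − σ·(i·γ')/(2(1+γ)) = (E + A)·σ + (λ/(2N))·(S·(1+γ) + conj(S)·σ²/(1+γ)) (for a complex number S = Σ∗v̂ evaluated pointwise) holds if and only if the pair of equations γ' = (2λ/N)·Im(S·conj(σ)) and i·σ' = 2(E + A)·σ + (λ/N)·S·(1+2γ) holds. -/

import Mathlib

/-- Pointwise equivalence between the single complex HFB equation for `σ` and the pair of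
equations for `(γ, σ)`, under the constraint `|σ|² = (1+γ)γ`. -/
theorem stmt7 (E A lam N : ℝ) (hN : 0 < N) (hlam : 0 < lam) (S : ℂ)
    (γ : ℝ → ℝ) (σ : ℝ → ℂ)
    (hγd : Differentiable ℝ γ) (hσd : Differentiable ℝ σ)
    (hpos : ∀ t, -1 < γ t)
    (hcon : ∀ t, ‖σ t‖ ^ 2 = (1 + γ t) * γ t)
    (t : ℝ) :
    (Complex.I * deriv σ t / 2 -
        σ t * (Complex.I * ((deriv γ t : ℝ) : ℂ)) / (2 * ((1 + γ t : ℝ) : ℂ)) =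
      ((E + A : ℝ) : ℂ) * σ t +
        ((lam / (2 * N) : ℝ) : ℂ) *
          (S * ((1 + γ t : ℝ) : ℂ) +
            (starRingEnd ℂ) S * σ t ^ 2 / ((1 + γ t : ℝ) : ℂ))) ↔
    (deriv γ t = (2 * lam / N) * (S * (starRingEnd ℂ) (σ t)).im ∧
      Complex.I * deriv σ t =
        2 * ((E + A : ℝ) : ℂ) * σ t +
          ((lam / N : ℝ) : ℂ) * S * ((1 + 2 * γ t : ℝ) : ℂ)) := by
  have hgR : (0:ℝ) < 1 + γ t := by linarith [hpos t]
  have hg : ((1 + γ t : ℝ) : ℂ) ≠ 0 := by exact_mod_cast ne_of_gt hgR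
  have hN' : (N : ℂ) ≠ 0 := by exact_mod_cast hN.ne'
  have hg' : (1 + (γ t : ℂ)) ≠ 0 := by push_cast at hg; exact hg
  have hLN : ((lam / N : ℝ) : ℂ) * (N : ℂ) = (lam : ℂ) := by
    push_cast; exact div_mul_cancel₀ _ hN'
  have hEA : ((E + A : ℝ) : ℂ) = (E : ℂ) + (A : ℂ) := by push_cast; ring
  have h12g : ((1 + 2 * γ t : ℝ) : ℂ) = 1 + 2 * ((γ t : ℝ) : ℂ) := by push_cast; ring
  -- constraint pointwise
  have hc : ∀ s, σ s * (starRingEnd ℂ) (σ s) = (((1 + γ s) * γ s : ℝ) : ℂ) := by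
    intro s
    rw [Complex.mul_conj, ← Complex.sq_norm]
    exact_mod_cast hcon s
  -- derivative of the constraint
  have hd : deriv σ t * (starRingEnd ℂ) (σ t) + σ t * (starRingEnd ℂ) (deriv σ t)
      = ((deriv γ t * (1 + 2 * γ t) : ℝ) : ℂ) := by
    have h1 := (hσd t).hasDerivAt
    have h2 : HasDerivAt (fun s => (starRingEnd ℂ) (σ s)) ((starRingEnd ℂ) (deriv σ t)) t := by
      have := h1.star
      simp only [RCLike.star_def] at this
      exact this
    have hprod := h1.mul h2
    have hR : HasDerivAt (fun s => (((1 + γ s) * γ s : ℝ) : ℂ))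
        ((deriv γ t * (1 + 2 * γ t) : ℝ) : ℂ) t := by
      have hγ := (hγd t).hasDerivAt
      have : HasDerivAt (fun s => (1 + γ s) * γ s) (deriv γ t * (1 + 2 * γ t)) t := by
        have := ((hasDerivAt_const t (1:ℝ)).add hγ).mul hγ
        exact this.congr_deriv (by simp only [Pi.add_apply]; ring)
      exact this.ofReal_comp
    have hfun : (σ * fun s => (starRingEnd ℂ) (σ s))
        = (fun s => (((1 + γ s) * γ s : ℝ) : ℂ)) := funext hc
    rw [hfun] at hprod
    exact hprod.unique hR
  have hct := hc t
  push_cast at hct hd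
  -- equivalence of P1 with its complex form
  have hcs : (starRingEnd ℂ) (S * (starRingEnd ℂ) (σ t)) = (starRingEnd ℂ) S * σ t := by
    simp [map_mul]
  have hP1 : (deriv γ t = (2 * lam / N) * (S * (starRingEnd ℂ) (σ t)).im) ↔
      (Complex.I * ((deriv γ t : ℝ) : ℂ)
        = ((lam / N : ℝ) : ℂ) * (S * (starRingEnd ℂ) (σ t) - (starRingEnd ℂ) S * σ t)) := by
    rw [← hcs]
    constructor
    · intro h
      rw [Complex.sub_conj, h]
      push_cast
      ring
    · intro h
      rw [Complex.sub_conj] at h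
      push_cast at h
      have : ((deriv γ t : ℝ) : ℂ) = ((2 * lam / N * (S * (starRingEnd ℂ) (σ t)).im : ℝ) : ℂ) := by
        apply mul_left_cancel₀ Complex.I_ne_zero
        push_cast
        linear_combination h
      exact_mod_cast this
  rw [hP1]
  constructor
  · intro h
    push_cast at h
    field_simp [hg'] at h
    -- conjugated equation
    have hconj := congrArg (starRingEnd ℂ) h
    simp only [map_mul, map_add, map_sub, map_pow, map_ofNat, map_one, Complex.conj_conj,
      Complex.conj_I, Complex.conj_ofReal] at hconj
    -- the real equation (complex form), N-cleared
    have key : (N : ℂ) * (Complex.I * ((deriv γ t : ℝ) : ℂ))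
        = (lam : ℂ) * (S * (starRingEnd ℂ) (σ t) - (starRingEnd ℂ) S * σ t) := by
      have hg2 : ((4:ℂ) * (1 + (γ t : ℂ)) ^ 2) ≠ 0 := by
        exact mul_ne_zero (by norm_num) (pow_ne_zero _ hg')
      apply mul_right_cancel₀ hg2
      linear_combination 4 * (1 + (γ t : ℂ)) * (starRingEnd ℂ) (σ t) * h - 4 * (1 + (γ t : ℂ)) * σ t * hconj
        - 4 * (N : ℂ) * Complex.I * (1 + (γ t : ℂ)) ^ 2 * hd
        + (4 * (1 + (γ t : ℂ)) * (2 * (N : ℂ) * Complex.I * ((deriv γ t : ℝ) : ℂ)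
            - (lam : ℂ) * (S * (starRingEnd ℂ) (σ t) - (starRingEnd ℂ) S * σ t))) * hct
    constructor
    · apply mul_right_cancel₀ hN'
      linear_combination key - (S * (starRingEnd ℂ) (σ t) - (starRingEnd ℂ) S * σ t) * hLN
    · -- N-cleared version of P2
      have p2c : (N : ℂ) * (Complex.I * deriv σ t)
          = 2 * (N : ℂ) * ((E : ℂ) + (A : ℂ)) * σ t
            + (lam : ℂ) * S * (1 + 2 * ((γ t : ℝ) : ℂ)) := by
        have h4 : ((4:ℂ) * (1 + (γ t : ℂ)) ^ 2) ≠ 0 :=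
          mul_ne_zero (by norm_num) (pow_ne_zero _ hg')
        apply mul_right_cancel₀ h4
        linear_combination 4 * (1 + (γ t : ℂ)) * h + (4 * (1 + (γ t : ℂ)) * σ t) * key
          + (4 * (1 + (γ t : ℂ)) * (lam : ℂ) * S) * hct
      apply mul_left_cancel₀ hN'
      linear_combination p2c - 2 * (N : ℂ) * σ t * hEA
        - (N : ℂ) * ((lam / N : ℝ) : ℂ) * S * h12g
        - (1 + 2 * ((γ t : ℝ) : ℂ)) * S * hLN
  · rintro ⟨p1, p2⟩
    have p1c : (N : ℂ) * (Complex.I * ((deriv γ t : ℝ) : ℂ))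
        = (lam : ℂ) * (S * (starRingEnd ℂ) (σ t) - (starRingEnd ℂ) S * σ t) := by
      linear_combination (N : ℂ) * p1
        + (S * (starRingEnd ℂ) (σ t) - (starRingEnd ℂ) S * σ t) * hLN
    have p2c : (N : ℂ) * (Complex.I * deriv σ t)
        = 2 * (N : ℂ) * ((E : ℂ) + (A : ℂ)) * σ t
          + (lam : ℂ) * S * (1 + 2 * ((γ t : ℝ) : ℂ)) := by
      linear_combination (N : ℂ) * p2 + 2 * (N : ℂ) * σ t * hEA
        + (N : ℂ) * ((lam / N : ℝ) : ℂ) * S * h12g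
        + (1 + 2 * ((γ t : ℝ) : ℂ)) * S * hLN
    push_cast
    field_simp [hg']
    linear_combination (1 + (γ t : ℂ)) * p2c
      - σ t * p1c
      - ((lam : ℂ) * S) * hct
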